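/- Let V be a vector space over a field of characteristic zero (or a module over a ℚ-algebra) with linear endomorphisms Lie, K, D, d_v such that K is nilpotent, Lie ∘ K − K ∘ Lie = D, D ∘ K = K ∘ D, and d_v ∘ K = K ∘ d_v. Define exp(K) := Σ_{m≥0} K^m / m! (a finite sum). If γ, Δ ∈ V satisfy Lie(γ) = d_v(Δ), then (Lie − D)(exp(K) γ) = d_v(exp(K) Δ). -/
import Mathlib


/-- The finite exponential sum `exp(K) = Σ_{j} K^j / j!` of a nilpotent
endomorphism `K` with `K ^ m = 0` over a field of characteristic zero. -/
noncomputable def nilExpSum (F : Type*) {R : Type*} [Field F] [Ring R] [Algebra F R]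
    (N : R) (m : ℕ) : R :=
  ∑ j ∈ Finset.range (m + 1), ((j.factorial : F)⁻¹) • N ^ j

private lemma comm_pow_aux {F R : Type*} [Field F] [Ring R] [Algebra F R]
    (Lie K D : R) (h1 : Lie * K - K * Lie = D) (h2 : D * K = K * D) :
    ∀ j : ℕ, Lie * K ^ (j + 1) = K ^ (j + 1) * Lie + ((j : F) + 1) • (D * K ^ j) := by
  have hLK : Lie * K = K * Lie + D := by rw [← h1]; abel
  have hDK : ∀ n : ℕ, K ^ n * D = D * K ^ n := fun n =>
    ((Commute.symm h2 : Commute K D).pow_left n).eq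
  intro j
  induction j with
  | zero => simp [hLK, one_smul]
  | succ j ih =>
    have hstep : Lie * K ^ (j + 1 + 1) = (Lie * K ^ (j + 1)) * K := by
      rw [pow_succ, ← mul_assoc]
    rw [hstep, ih]
    rw [add_mul, smul_mul_assoc, mul_assoc, hLK, mul_add, ← mul_assoc, ← pow_succ,
      mul_assoc, ← pow_succ, hDK]
    push_cast
    match_scalars <;> ring

private lemma exp_comm {F V : Type*} [Field F] [CharZero F] [AddCommGroup V] [Module F V]
    (Lie K D : Module.End F V) (m : ℕ) (hm : K ^ m = 0)
    (h1 : Lie * K - K * Lie = D) (h2 : D * K = K * D) :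
    Lie * nilExpSum F K m = nilExpSum F K m * Lie + D * nilExpSum F K m := by
  have hA : Lie * nilExpSum F K m - nilExpSum F K m * Lie
      = ∑ j ∈ Finset.range m, ((j.factorial : F)⁻¹) • (D * K ^ j) := by
    unfold nilExpSum
    rw [Finset.mul_sum, Finset.sum_mul, ← Finset.sum_sub_distrib]
    rw [Finset.sum_range_succ'
      (fun j => Lie * ((j.factorial : F)⁻¹ • K ^ j) - ((j.factorial : F)⁻¹ • K ^ j) * Lie)]
    have h0 : Lie * (((Nat.factorial 0 : F))⁻¹ • K ^ 0)
        - (((Nat.factorial 0 : F))⁻¹ • K ^ 0) * Lie = 0 := by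
      simp [Nat.factorial]
    rw [h0, add_zero]
    apply Finset.sum_congr rfl
    intro j _
    rw [mul_smul_comm, smul_mul_assoc, ← smul_sub]
    have hc : Lie * K ^ (j + 1) - K ^ (j + 1) * Lie = ((j : F) + 1) • (D * K ^ j) := by
      rw [comm_pow_aux (F := F) Lie K D h1 h2 j]; abel
    rw [hc, smul_smul]
    congr 1
    rw [Nat.factorial_succ]
    push_cast
    have hj1 : ((j : F) + 1) ≠ 0 := by
      have : ((j + 1 : ℕ) : F) ≠ 0 := Nat.cast_ne_zero.2 j.succ_ne_zero
      push_cast at this; exact this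
    have hjf : ((j.factorial : F)) ≠ 0 := Nat.cast_ne_zero.2 j.factorial_ne_zero
    field_simp
  have hB : D * nilExpSum F K m
      = ∑ j ∈ Finset.range m, ((j.factorial : F)⁻¹) • (D * K ^ j) := by
    unfold nilExpSum
    rw [Finset.mul_sum, Finset.sum_range_succ]
    simp [hm, mul_smul_comm]
  rw [hB, ← hA]; abel

/-- The identity `(Lie - D)(exp(K) γ) = d_v (exp(K) Δ)` from the construction
of fully extended BV-BFV Lagrangian field theories via `K`-sequences: given
`Lie ∘ K - K ∘ Lie = D`, `D ∘ K = K ∘ D`, `d_v ∘ K = K ∘ d_v`, `K` nilpotent,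
and `Lie γ = d_v Δ`. -/
theorem K_sequence_ascent
    {F V : Type*} [Field F] [CharZero F] [AddCommGroup V] [Module F V]
    (Lie K D dv : Module.End F V) (m : ℕ) (hm : K ^ m = 0)
    (h1 : Lie * K - K * Lie = D)
    (h2 : D * K = K * D)
    (h3 : dv * K = K * dv)
    (γ Δ : V) (hγ : Lie γ = dv Δ) :
    (Lie - D) (nilExpSum F K m γ) = dv (nilExpSum F K m Δ) := by
  have hE := exp_comm Lie K D m hm h1 h2
  have hdvE : dv * nilExpSum F K m = nilExpSum F K m * dv := by
    unfold nilExpSum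
    rw [Finset.mul_sum, Finset.sum_mul]
    apply Finset.sum_congr rfl
    intro j _
    rw [mul_smul_comm, smul_mul_assoc]
    congr 1
    exact ((Commute.symm h3 : Commute K dv).pow_left j).symm.eq
  have key : Lie (nilExpSum F K m γ) =
      nilExpSum F K m (Lie γ) + D (nilExpSum F K m γ) := by
    have := congrArg (fun f : Module.End F V => f γ) hE
    simpa [Module.End.mul_apply] using this
  have hfin : (Lie - D) (nilExpSum F K m γ) = nilExpSum F K m (dv Δ) := by
    rw [LinearMap.sub_apply, key, hγ]; abel
  rw [hfin]
  have := congrArg (fun f : Module.End F V => f Δ) hdvE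
  simpa [Module.End.mul_apply] using this.symm
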